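/- arXiv:1802.04700 — 2 statements merged into one kernel-verified Lean document; each statement's English description precedes it below -/
import Mathlib

section
/- Let f, s : ℝ → ℝ be twice continuously differentiable at x with s continuous, s(x) > 0 and s ≥ 0 near x. Then as ε → 0⁺, the ratio D(ε) = [∫_{-1}^{1} (f(x + aε) - f(x)) s(x + aε) da] / [∫_{-1}^{1} s(x + aε) da] satisfies D(ε)/ε² → (1/3)·[f''(x)/2 + f'(x) s'(x)/s(x)]. -/
open MeasureTheory intervalIntegral Filter
open Set

lemma key_cube (g : ℝ → ℝ) (x : ℝ) (hg : ContDiffAt ℝ 2 g x) (hgx : g x = 0) :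
    Tendsto (fun ε : ℝ => (∫ y in (x - ε)..(x + ε), g y) / ε ^ 3)
      (nhdsWithin 0 (Set.Ioi 0)) (nhds (deriv (deriv g) x / 3)) := by
  obtain ⟨u, hu, hgu⟩ := hg.contDiffOn le_rfl (by simp)
  obtain ⟨δ, hδ, hball⟩ := Metric.mem_nhds_iff.mp hu
  set V := Metric.ball x δ with hV
  have hVopen : IsOpen V := Metric.isOpen_ball
  have hxV : x ∈ V := Metric.mem_ball_self hδ
  have hgV : ContDiffOn ℝ 2 g V := hgu.mono hball
  have hgc : ContinuousOn g V := hgV.continuousOn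
  have hg1 : ∀ y ∈ V, HasDerivAt g (deriv g y) y := fun y hy =>
    ((hgV.differentiableOn two_ne_zero).differentiableAt (hVopen.mem_nhds hy)).hasDerivAt
  have hg1' : ContDiffOn ℝ 1 (deriv g) V := hgV.deriv_of_isOpen hVopen (by norm_num)
  have hg2 : ∀ y ∈ V, HasDerivAt (deriv g) (deriv (deriv g) y) y := fun y hy =>
    ((hg1'.differentiableOn one_ne_zero).differentiableAt (hVopen.mem_nhds hy)).hasDerivAt
  have hmemp : ∀ ε : ℝ, |ε| < δ → x + ε ∈ V := by
    intro ε hε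
    simp only [hV, Metric.mem_ball, Real.dist_eq, add_sub_cancel_left]
    exact hε
  have hmemm : ∀ ε : ℝ, |ε| < δ → x - ε ∈ V := by
    intro ε hε
    simp only [hV, Metric.mem_ball, Real.dist_eq]
    rw [show x - ε - x = -ε by ring, abs_neg]
    exact hε
  set G := fun t : ℝ => ∫ y in x..t, g y with hGdef
  have hInt : ∀ t ∈ V, IntervalIntegrable g volume x t := fun t ht =>
    ((hgc.mono ((convex_ball x δ).ordConnected.uIcc_subset hxV ht))).intervalIntegrable
  have hG : ∀ t ∈ V, HasDerivAt G (g t) t := fun t ht =>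
    intervalIntegral.integral_hasDerivAt_right (hInt t ht)
      (ContinuousOn.stronglyMeasurableAtFilter hVopen hgc t ht)
      (hgc.continuousAt (hVopen.mem_nhds ht))
  have hsplit : ∀ ε : ℝ, |ε| < δ → (∫ y in (x - ε)..(x + ε), g y) = G (x + ε) - G (x - ε) := by
    intro ε hε
    have h1 : IntervalIntegrable g volume (x - ε) x := (hInt _ (hmemm ε hε)).symm
    have h2 : IntervalIntegrable g volume x (x + ε) := hInt _ (hmemp ε hε)
    have := intervalIntegral.integral_add_adjacent_intervals h1 h2
    rw [← this]
    simp only [hGdef]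
    rw [intervalIntegral.integral_symm x (x - ε)]
    ring
  -- derivative of the shifted maps
  have hplus : ∀ ε : ℝ, |ε| < δ → HasDerivAt (fun ε : ℝ => g (x + ε)) (deriv g (x + ε)) ε := by
    intro ε hε
    have h := (hg1 _ (hmemp ε hε)).comp ε ((hasDerivAt_id ε).const_add x)
    simpa [Function.comp_def] using h
  have hminus : ∀ ε : ℝ, |ε| < δ → HasDerivAt (fun ε : ℝ => g (x - ε)) (-deriv g (x - ε)) ε := by
    intro ε hε
    have h := (hg1 _ (hmemm ε hε)).comp ε ((hasDerivAt_id ε).const_sub x)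
    simpa [Function.comp_def] using h
  have hdplus : ∀ ε : ℝ, |ε| < δ →
      HasDerivAt (fun ε : ℝ => deriv g (x + ε)) (deriv (deriv g) (x + ε)) ε := by
    intro ε hε
    have h := (hg2 _ (hmemp ε hε)).comp ε ((hasDerivAt_id ε).const_add x)
    simpa [Function.comp_def] using h
  have hdminus : ∀ ε : ℝ, |ε| < δ →
      HasDerivAt (fun ε : ℝ => deriv g (x - ε)) (-deriv (deriv g) (x - ε)) ε := by
    intro ε hε
    have h := (hg2 _ (hmemm ε hε)).comp ε ((hasDerivAt_id ε).const_sub x)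
    simpa [Function.comp_def] using h
  set L := deriv (deriv g) x with hL
  -- slope limits for deriv g at x
  have hslope : Tendsto (slope (deriv g) x) (nhdsWithin x {x}ᶜ) (nhds L) :=
    hasDerivAt_iff_tendsto_slope.mp (hg2 x hxV)
  have hmapp : Tendsto (fun ε : ℝ => x + ε) (nhdsWithin 0 (Set.Ioi 0)) (nhdsWithin x {x}ᶜ) := by
    apply tendsto_nhdsWithin_of_tendsto_nhds_of_eventually_within
    · have : Tendsto (fun ε : ℝ => x + ε) (nhds 0) (nhds x) := by
        simpa [Pi.add_def] using (continuous_const.add continuous_id).tendsto (0 : ℝ)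
      exact this.mono_left nhdsWithin_le_nhds
    · filter_upwards [self_mem_nhdsWithin] with ε hε
      have : (0:ℝ) < ε := hε
      simp only [Set.mem_compl_iff, Set.mem_singleton_iff]
      intro h
      nlinarith [congrArg (fun t => t - x) h]
  have hmapm : Tendsto (fun ε : ℝ => x - ε) (nhdsWithin 0 (Set.Ioi 0)) (nhdsWithin x {x}ᶜ) := by
    apply tendsto_nhdsWithin_of_tendsto_nhds_of_eventually_within
    · have : Tendsto (fun ε : ℝ => x - ε) (nhds 0) (nhds x) := by
        simpa [Pi.sub_def] using (continuous_const.sub continuous_id).tendsto (0 : ℝ)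
      exact this.mono_left nhdsWithin_le_nhds
    · filter_upwards [self_mem_nhdsWithin] with ε hε
      have : (0:ℝ) < ε := hε
      simp only [Set.mem_compl_iff, Set.mem_singleton_iff]
      intro h
      nlinarith [congrArg (fun t => t - x) h]
  have T1 : Tendsto (fun ε : ℝ => (deriv g (x + ε) - deriv g x) / ε)
      (nhdsWithin 0 (Set.Ioi 0)) (nhds L) := by
    have := hslope.comp hmapp
    refine this.congr (fun ε => ?_)
    simp only [Function.comp_apply, slope_def_field]
    rw [show x + ε - x = ε by ring]
  have T2 : Tendsto (fun ε : ℝ => (deriv g x - deriv g (x - ε)) / ε)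
      (nhdsWithin 0 (Set.Ioi 0)) (nhds L) := by
    have := hslope.comp hmapm
    refine this.congr (fun ε => ?_)
    simp only [Function.comp_apply, slope_def_field]
    rw [show x - ε - x = -ε by ring, div_neg, ← neg_div, neg_sub]
  have hdiv1 : Tendsto (fun ε : ℝ => (deriv g (x + ε) - deriv g (x - ε)) / (6 * ε))
      (nhdsWithin 0 (Set.Ioi 0)) (nhds (L / 3)) := by
    have hsum := (T1.add T2).div_const 6
    have h2 : (L + L) / 6 = L / 3 := by ring
    rw [h2] at hsum
    refine hsum.congr' ?_
    filter_upwards [self_mem_nhdsWithin] with ε hε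
    have hne : ε ≠ 0 := ne_of_gt hε
    field_simp
    ring_nf
  -- L'Hopital level 1
  have hdiv0 : Tendsto (fun ε : ℝ => (g (x + ε) + g (x - ε)) / (3 * ε ^ 2))
      (nhdsWithin 0 (Set.Ioi 0)) (nhds (L / 3)) := by
    refine HasDerivAt.lhopital_zero_right_on_Ioo hδ
      (f' := fun ε => deriv g (x + ε) - deriv g (x - ε)) (g' := fun ε => 6 * ε)
      ?_ ?_ ?_ ?_ ?_ hdiv1
    · intro ε hε
      have hε' : |ε| < δ := by rw [abs_of_pos hε.1]; exact hε.2
      have h := (hplus ε hε').add (hminus ε hε')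
      rw [← sub_eq_add_neg] at h
      exact h
    · intro ε hε
      have h := (hasDerivAt_pow 2 ε).const_mul (3:ℝ)
      refine h.congr_deriv ?_
      push_cast
      ring
    · intro ε hε
      have := hε.1
      positivity
    · -- g(x+ε)+g(x-ε) → 0
      have hgcx : ContinuousAt g x := hgc.continuousAt (hVopen.mem_nhds hxV)
      have h1 : Tendsto (fun ε : ℝ => g (x + ε)) (nhds 0) (nhds (g x)) := by
        have := hgcx.tendsto.comp (by simpa using (continuous_const.add continuous_id).tendsto (0:ℝ))
        exact this
      have h2 : Tendsto (fun ε : ℝ => g (x - ε)) (nhds 0) (nhds (g x)) := by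
        have := hgcx.tendsto.comp (by simpa using (continuous_const.sub continuous_id).tendsto (0:ℝ))
        exact this
      have h3 := (h1.add h2).mono_left (nhdsWithin_le_nhds (s := Set.Ioi (0:ℝ)))
      rw [hgx] at h3
      simpa using h3
    · have hc : Continuous (fun ε : ℝ => 3 * ε ^ 2) := by fun_prop
      have h0 := hc.tendsto 0
      norm_num at h0
      exact h0.mono_left nhdsWithin_le_nhds
  -- L'Hopital level 0
  have habs : IsOpen {ε : ℝ | |ε| < δ} := isOpen_lt continuous_abs continuous_const
  refine HasDerivAt.lhopital_zero_right_on_Ioo hδ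
    (f' := fun ε => g (x + ε) + g (x - ε)) (g' := fun ε => 3 * ε ^ 2)
    ?_ ?_ ?_ ?_ ?_ hdiv0
  · intro ε hε
    have hε' : |ε| < δ := by rw [abs_of_pos hε.1]; exact hε.2
    have hp1 : HasDerivAt (fun ε : ℝ => G (x + ε)) (g (x + ε)) ε := by
      have h := (hG _ (hmemp ε hε')).comp ε ((hasDerivAt_id ε).const_add x)
      simpa [Function.comp_def] using h
    have hm1 : HasDerivAt (fun ε : ℝ => G (x - ε)) (-g (x - ε)) ε := by
      have h := (hG _ (hmemm ε hε')).comp ε ((hasDerivAt_id ε).const_sub x)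
      simpa [Function.comp_def] using h
    have h := hp1.sub hm1
    rw [sub_neg_eq_add] at h
    refine h.congr_of_eventuallyEq ?_
    filter_upwards [habs.mem_nhds hε'] with ε' hε''
    exact hsplit ε' hε''
  · intro ε hε
    have h := hasDerivAt_pow 3 ε
    norm_num at h
    exact h
  · intro ε hε
    have := hε.1
    positivity
  · have hGx : ContinuousAt G x := (hG x hxV).continuousAt
    have h1 : Tendsto (fun ε : ℝ => G (x + ε)) (nhds 0) (nhds (G x)) := by
      have hcont : Continuous (fun ε : ℝ => x + ε) := by fun_prop
      have := hGx.tendsto.comp (by simpa using hcont.tendsto (0:ℝ))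
      exact this
    have h2 : Tendsto (fun ε : ℝ => G (x - ε)) (nhds 0) (nhds (G x)) := by
      have hcont : Continuous (fun ε : ℝ => x - ε) := by fun_prop
      have := hGx.tendsto.comp (by simpa using hcont.tendsto (0:ℝ))
      exact this
    have h3 := (h1.sub h2).mono_left (nhdsWithin_le_nhds (s := Set.Ioi (0:ℝ)))
    rw [sub_self] at h3
    refine (h3.congr' ?_)
    filter_upwards [eventually_nhdsWithin_of_eventually_nhds (habs.eventually_mem
      (by simpa using hδ))] with ε hε
    exact (hsplit ε hε).symm
  · have hc : Continuous (fun ε : ℝ => ε ^ 3) := by fun_prop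
    have h0 := hc.tendsto 0
    norm_num at h0
    exact h0.mono_left nhdsWithin_le_nhds

theorem stmt_7 (f s : ℝ → ℝ) (x : ℝ)
    (hf : ContDiffAt ℝ 2 f x) (hs : ContDiffAt ℝ 2 s x)
    (hsc : Continuous s) (hsx : 0 < s x) (hs0 : ∀ᶠ y in nhds x, 0 ≤ s y) :
    Tendsto (fun ε : ℝ =>
        ((∫ a in (-1:ℝ)..1, (f (x + a * ε) - f x) * s (x + a * ε)) /
          (∫ a in (-1:ℝ)..1, s (x + a * ε))) / ε ^ 2)
      (nhdsWithin 0 (Set.Ioi 0))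
      (nhds ((1/3) * (deriv (deriv f) x / 2 + deriv f x * deriv s x / s x))) := by
  set g : ℝ → ℝ := fun y => (f y - f x) * s y with hgdef
  have hg : ContDiffAt ℝ 2 g x := (hf.sub contDiffAt_const).mul hs
  have hgx : g x = 0 := by simp [hgdef]
  -- numerator limit
  have TA := key_cube g x hg hgx
  -- denominator limit
  set S : ℝ → ℝ := fun t => ∫ y in x..t, s y with hSdef
  have hS : ∀ t, HasDerivAt S (s t) t := fun t =>
    intervalIntegral.integral_hasDerivAt_right (hsc.intervalIntegrable x t)
      hsc.aestronglyMeasurable.stronglyMeasurableAtFilter hsc.continuousAt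
  set β : ℝ → ℝ := fun ε => ∫ y in (x - ε)..(x + ε), s y with hβdef
  have hβeq : ∀ ε : ℝ, β ε = S (x + ε) - S (x - ε) := by
    intro ε
    have h1 : IntervalIntegrable s volume (x - ε) x := hsc.intervalIntegrable _ _
    have h2 : IntervalIntegrable s volume x (x + ε) := hsc.intervalIntegrable _ _
    have := intervalIntegral.integral_add_adjacent_intervals h1 h2
    rw [hβdef]
    simp only
    rw [← this]
    simp only [hSdef]
    rw [intervalIntegral.integral_symm x (x - ε)]
    ring
  have hβ0 : β 0 = 0 := by simp [hβdef]
  have hβd : HasDerivAt β (2 * s x) 0 := by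
    have hp : HasDerivAt (fun ε : ℝ => S (x + ε)) (s (x + 0)) 0 := by
      have h := (hS (x + 0)).comp 0 ((hasDerivAt_id (0:ℝ)).const_add x)
      simpa [Function.comp_def] using h
    have hm : HasDerivAt (fun ε : ℝ => S (x - ε)) (-s (x - 0)) 0 := by
      have h := (hS (x - 0)).comp 0 ((hasDerivAt_id (0:ℝ)).const_sub x)
      simpa [Function.comp_def] using h
    have h := hp.sub hm
    rw [sub_neg_eq_add] at h
    have heq : (fun ε : ℝ => S (x + ε) - S (x - ε)) = β := by
      funext ε; rw [hβeq ε]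
    rw [show ((fun ε : ℝ => S (x + ε)) - fun ε : ℝ => S (x - ε)) = β from heq] at h
    simpa [two_mul] using h
  have TB : Tendsto (fun ε : ℝ => β ε / ε) (nhdsWithin 0 (Set.Ioi 0)) (nhds (2 * s x)) := by
    have h := hasDerivAt_iff_tendsto_slope.mp hβd
    have hmono : nhdsWithin (0:ℝ) (Set.Ioi 0) ≤ nhdsWithin 0 {(0:ℝ)}ᶜ :=
      nhdsWithin_mono 0 (fun y hy => ne_of_gt hy)
    have h2 := h.mono_left hmono
    refine h2.congr (fun ε => ?_)
    simp [slope_def_field, hβ0]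
  -- combine
  have hT := TA.div TB (by positivity)
  have hfinal : (deriv (deriv g) x / 3) / (2 * s x)
      = 1/3 * (deriv (deriv f) x / 2 + deriv f x * deriv s x / s x) := by
    obtain ⟨u1, hu1, hfu⟩ := hf.contDiffOn le_rfl (by simp)
    obtain ⟨u2, hu2, hsu⟩ := hs.contDiffOn le_rfl (by simp)
    set W := interior (u1 ∩ u2) with hWdef
    have hWopen : IsOpen W := isOpen_interior
    have hxW : x ∈ W := by
      rw [hWdef, mem_interior_iff_mem_nhds]
      exact Filter.inter_mem hu1 hu2
    have hsub : W ⊆ u1 ∩ u2 := interior_subset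
    have hfW : ContDiffOn ℝ 2 f W := hfu.mono (fun y hy => (hsub hy).1)
    have hsW : ContDiffOn ℝ 2 s W := hsu.mono (fun y hy => (hsub hy).2)
    have hfd : ∀ y ∈ W, HasDerivAt f (deriv f y) y := fun y hy =>
      ((hfW.differentiableOn two_ne_zero).differentiableAt (hWopen.mem_nhds hy)).hasDerivAt
    have hsd : ∀ y ∈ W, HasDerivAt s (deriv s y) y := fun y hy =>
      ((hsW.differentiableOn two_ne_zero).differentiableAt (hWopen.mem_nhds hy)).hasDerivAt
    have hf1' : ContDiffOn ℝ 1 (deriv f) W := hfW.deriv_of_isOpen hWopen (by norm_num)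
    have hs1' : ContDiffOn ℝ 1 (deriv s) W := hsW.deriv_of_isOpen hWopen (by norm_num)
    have hfdd : HasDerivAt (deriv f) (deriv (deriv f) x) x :=
      ((hf1'.differentiableOn one_ne_zero).differentiableAt (hWopen.mem_nhds hxW)).hasDerivAt
    have hsdd : HasDerivAt (deriv s) (deriv (deriv s) x) x :=
      ((hs1'.differentiableOn one_ne_zero).differentiableAt (hWopen.mem_nhds hxW)).hasDerivAt
    have hgderiv : ∀ y ∈ W, deriv g y = deriv f y * s y + (f y - f x) * deriv s y := fun y hy =>
      (((hfd y hy).sub_const (f x)).mul (hsd y hy)).deriv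
    have hev : deriv g =ᶠ[nhds x] (fun y => deriv f y * s y + (f y - f x) * deriv s y) := by
      filter_upwards [hWopen.mem_nhds hxW] with y hy
      exact hgderiv y hy
    have hphi : HasDerivAt (fun y => deriv f y * s y + (f y - f x) * deriv s y)
        (deriv (deriv f) x * s x + deriv f x * deriv s x +
          (deriv f x * deriv s x + (f x - f x) * deriv (deriv s) x)) x :=
      (hfdd.mul (hsd x hxW)).add (((hfd x hxW).sub_const (f x)).mul hsdd)
    have hd2g : deriv (deriv g) x
        = deriv (deriv f) x * s x + 2 * (deriv f x * deriv s x) := by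
      rw [hev.deriv_eq, hphi.deriv]; ring
    rw [hd2g]
    have hsne : s x ≠ 0 := ne_of_gt hsx
    field_simp
  rw [hfinal] at hT
  refine hT.congr' ?_
  filter_upwards [self_mem_nhdsWithin] with ε hε
  have hε' : (0:ℝ) < ε := hε
  have hne : ε ≠ 0 := ne_of_gt hε'
  have hnum : (∫ a in (-1:ℝ)..1, (f (x + a * ε) - f x) * s (x + a * ε))
      = ε⁻¹ * ∫ y in (x - ε)..(x + ε), g y := by
    have h1 : (∫ a in (-1:ℝ)..1, (f (x + a * ε) - f x) * s (x + a * ε))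
        = ∫ a in (-1:ℝ)..1, g (x + ε * a) := by
      refine intervalIntegral.integral_congr (fun a _ => ?_)
      rw [hgdef]
      simp only [mul_comm a ε]
    rw [h1, intervalIntegral.integral_comp_add_mul g hne x]
    rw [show x + ε * (-1) = x - ε by ring, show x + ε * 1 = x + ε by ring, smul_eq_mul]
  have hden : (∫ a in (-1:ℝ)..1, s (x + a * ε)) = ε⁻¹ * β ε := by
    have h1 : (∫ a in (-1:ℝ)..1, s (x + a * ε)) = ∫ a in (-1:ℝ)..1, s (x + ε * a) := by
      refine intervalIntegral.integral_congr (fun a _ => ?_)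
      simp only [mul_comm a ε]
    rw [h1, intervalIntegral.integral_comp_add_mul s hne x]
    rw [show x + ε * (-1) = x - ε by ring, show x + ε * 1 = x + ε by ring, smul_eq_mul]
  rw [hnum, hden]
  rw [mul_div_mul_left _ _ (inv_ne_zero hne)]
  by_cases hβz : β ε = 0
  · simp [hβz]
  · simp only [Pi.div_apply]
    field_simp
end

section
/- Let K : ℝ → ℝ be a nonnegative integrable function with ∫ K = 1, ∫ K² < ∞ and compact support. Then lim_{φ → ∞} φ · θ_φ = 2 ∫_ℝ K(u)² du, where θ_φ = (1/2) ∫_ℝ (∫_{(z-1)/φ}^{(z+1)/φ} K(a) da)² dz. -/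
open MeasureTheory intervalIntegral Filter Set

noncomputable def gg (K : ℝ → ℝ) (φ : ℝ) (w : ℝ) : ℝ :=
  (φ/2) * ∫ a in (w - φ⁻¹)..(w + φ⁻¹), K a

lemma norm_sq_L2 (u : Lp ℝ 2 (volume : Measure ℝ)) : ‖u‖^2 = ∫ w, (u w)^2 := by
  rw [← real_inner_self_eq_norm_sq, L2.inner_def]
  refine integral_congr_ae (Eventually.of_forall fun w => ?_)
  simp [RCLike.inner_apply, sq]


lemma alg (K : ℝ → ℝ) {φ : ℝ} (hφ : 1 ≤ φ) :
    φ * ((1/2) * ∫ z, (∫ a in ((z - 1)/φ)..((z + 1)/φ), K a) ^ 2)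
      = 2 * ∫ w, (gg K φ w)^2 := by
  have hφ0 : 0 < φ := lt_of_lt_of_le one_pos hφ
  have hne : φ ≠ 0 := hφ0.ne'
  have key : ∫ z, (∫ a in ((z - 1)/φ)..((z + 1)/φ), K a) ^ 2
      = φ * ∫ w, (∫ a in (w - φ⁻¹)..(w + φ⁻¹), K a) ^ 2 := by
    have h1 := MeasureTheory.Measure.integral_comp_mul_left
      (fun z => (∫ a in ((z - 1)/φ)..((z + 1)/φ), K a) ^ 2) φ
    have h2 : (fun w : ℝ => (∫ a in ((φ * w - 1)/φ)..((φ * w + 1)/φ), K a) ^ 2)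
        = fun w => (∫ a in (w - φ⁻¹)..(w + φ⁻¹), K a) ^ 2 := by
      funext w
      rw [show (φ * w - 1)/φ = w - φ⁻¹ by field_simp,
        show (φ * w + 1)/φ = w + φ⁻¹ by field_simp]
    rw [h2, abs_of_pos (inv_pos.mpr hφ0), smul_eq_mul] at h1
    rw [h1, ← mul_assoc, mul_inv_cancel₀ hne, one_mul]
  have h3 : ∫ w, (gg K φ w)^2
      = (φ/2)^2 * ∫ w, (∫ a in (w - φ⁻¹)..(w + φ⁻¹), K a) ^ 2 := by
    simp only [gg, mul_pow]
    exact integral_const_mul _ _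
  rw [key, h3]; ring

lemma gg_memℒp (K : ℝ → ℝ) (hKint : Integrable K) (hKsupp : HasCompactSupport K)
    {φ : ℝ} (hφ : 1 ≤ φ) : MemLp (gg K φ) 2 (volume : Measure ℝ) := by
  have hφ0 : 0 < φ := lt_of_lt_of_le one_pos hφ
  have hε0 : 0 < φ⁻¹ := inv_pos.mpr hφ0
  have hε1 : φ⁻¹ ≤ 1 := inv_le_one_of_one_le₀ hφ
  have hii : ∀ a b : ℝ, IntervalIntegrable K volume a b := fun a b =>
    hKint.intervalIntegrable
  have hA : Continuous (fun x : ℝ => ∫ a in (0:ℝ)..x, K a) :=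
    intervalIntegral.continuous_primitive hii 0
  have heq : ∀ w : ℝ, gg K φ w
      = (φ/2) * ((∫ a in (0:ℝ)..(w + φ⁻¹), K a) - ∫ a in (0:ℝ)..(w - φ⁻¹), K a) := by
    intro w
    unfold gg
    congr 1
    rw [eq_sub_iff_add_eq, add_comm,
      intervalIntegral.integral_add_adjacent_intervals (hii 0 (w - φ⁻¹)) (hii (w - φ⁻¹) (w + φ⁻¹))]
  have hcont : Continuous (gg K φ) := by
    have : Continuous fun w : ℝ =>
        (φ/2) * ((∫ a in (0:ℝ)..(w + φ⁻¹), K a) - ∫ a in (0:ℝ)..(w - φ⁻¹), K a) :=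
      continuous_const.mul ((hA.comp (continuous_id.add continuous_const)).sub
        (hA.comp (continuous_id.sub continuous_const)))
    exact this.congr fun w => (heq w).symm
  obtain ⟨R₀, hR₀⟩ : ∃ R, tsupport K ⊆ Metric.closedBall 0 R :=
    hKsupp.isCompact.isBounded.subset_closedBall 0
  set R := max R₀ 0 with hRdef
  have hR : tsupport K ⊆ Metric.closedBall 0 R :=
    hR₀.trans (Metric.closedBall_subset_closedBall (le_max_left _ _))
  have hR0 : 0 ≤ R := le_max_right _ _
  have hsupp : HasCompactSupport (gg K φ) := by
    refine HasCompactSupport.intro (isCompact_closedBall (0:ℝ) (R + 1)) fun w hw => ?_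
    simp only [Metric.mem_closedBall, dist_zero_right, Real.norm_eq_abs, not_le] at hw
    unfold gg
    rw [intervalIntegral.integral_congr (g := fun _ => 0) ?_, intervalIntegral.integral_zero,
      mul_zero]
    intro x hx
    rw [Set.uIcc_of_le (by linarith)] at hx
    have hxR : R < |x| := by
      obtain ⟨hx1, hx2⟩ := hx
      rcases le_or_gt 0 w with h | h
      · have hww : R + 1 < w := by rwa [abs_of_nonneg h] at hw
        rw [abs_of_pos (by linarith)]
        linarith
      · have hww : R + 1 < -w := by rwa [abs_of_neg h] at hw
        rw [abs_of_neg (by linarith)]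
        linarith
    by_contra hKx
    exact hxR.not_ge (by simpa using hR (subset_tsupport K hKx))
  exact hcont.memLp_of_hasCompactSupport hsupp


lemma contD (K : ℝ → ℝ) (hK2 : MemLp K 2 (volume : Measure ℝ)) :
    ∃ D : ℝ → ℝ, ContinuousAt D 0 ∧ D 0 = 0 ∧
      ∀ t, D t = ∫ w, (K (w + t) - K w)^2 := by
  classical
  have hgm : ∀ t : ℝ, MeasurePreserving (fun x : ℝ => x + t) volume volume :=
    fun t => measurePreserving_add_right volume t
  set Kl : Lp ℝ 2 (volume : Measure ℝ) := hK2.toLp K with hKl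
  set g : ℝ → C(ℝ, ℝ) := fun t => ⟨fun x => x + t, by continuity⟩ with hg
  have hgc : Continuous g := by
    apply ContinuousMap.continuous_of_continuous_uncurry
    exact continuous_snd.add continuous_fst
  have hT : Continuous (fun t => Lp.compMeasurePreserving (E := ℝ) (g t) (hgm t) Kl) :=
    Continuous.compMeasurePreservingLp continuous_const hgc hgm (by norm_num)
  set T := fun t => Lp.compMeasurePreserving (E := ℝ) (g t) (hgm t) Kl with hTdef
  have hcoe : ∀ t, (T t : ℝ → ℝ) =ᵐ[volume] fun w => K (w + t) := by
    intro t
    refine (Lp.coeFn_compMeasurePreserving Kl (hgm t)).trans ?_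
    have h1 : (Kl : ℝ → ℝ) =ᵐ[volume] K := hK2.coeFn_toLp
    exact (hgm t).quasiMeasurePreserving.ae_eq_comp h1
  refine ⟨fun t => ‖T t - T 0‖^2, ?_, by simp, fun t => ?_⟩
  · exact ((hT.sub continuous_const).norm.pow 2).continuousAt
  · show ‖T t - T 0‖^2 = _
    rw [norm_sq_L2 (T t - T 0)]
    refine integral_congr_ae ?_
    have h2 : ((T t - T 0 : Lp ℝ 2 volume) : ℝ → ℝ) =ᵐ[volume]
        fun w => K (w + t) - K w := by
      filter_upwards [Lp.coeFn_sub (T t) (T 0), hcoe t, hcoe 0] with w hw h1 h0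
      rw [hw, Pi.sub_apply, h1, h0, add_zero]
    filter_upwards [h2] with w hw
    rw [hw]

lemma bound (K : ℝ → ℝ) (hKm : StronglyMeasurable K)
    (hK2 : MemLp K 2 (volume : Measure ℝ)) {φ η δ : ℝ} (hφ : 1 ≤ φ) (hδ : 0 < δ)
    (hφδ : δ⁻¹ ≤ φ) (hη : 0 ≤ η) (hKint : Integrable K)
    (hD : ∀ s : ℝ, |s| ≤ δ → (∫ w, (K (w + s) - K w)^2) ≤ η) :
    ∫ w, (gg K φ w - K w)^2 ≤ η := by
  have hφ0 : 0 < φ := lt_of_lt_of_le one_pos hφ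
  set ε := φ⁻¹ with hεdef
  have hε0 : 0 < ε := inv_pos.mpr hφ0
  have hεδ : ε ≤ δ := by
    rw [hεdef, ← inv_inv δ]
    exact inv_anti₀ (inv_pos.mpr hδ) hφδ
  set μs : Measure ℝ := volume.restrict (Ioc (-ε) ε) with hμs
  have hμsfin : IsFiniteMeasure μs := by
    constructor
    rw [hμs, Measure.restrict_apply_univ]
    exact measure_Ioc_lt_top
  have hμsuniv : μs Set.univ = ENNReal.ofReal (2*ε) := by
    rw [hμs, Measure.restrict_apply_univ, Real.volume_Ioc]
    ring_nf
  -- pointwise representation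
  have hrep : ∀ w : ℝ, gg K φ w - K w = (φ/2) * ∫ s, (K (w + s) - K w) ∂μs := by
    intro w
    have hKw : IntervalIntegrable (fun s => K (w + s)) volume (-ε) ε := by
      have h0 : Integrable (fun s => K (w + s)) volume := hKint.comp_add_left w
      exact h0.intervalIntegrable
    have h1 : ∫ s in (-ε)..ε, K (w + s) = ∫ a in (w - ε)..(w + ε), K a := by
      rw [intervalIntegral.integral_comp_add_left (fun a => K a) w]
      norm_num
      rw [sub_eq_add_neg]
    have h2 : ∫ s in (-ε)..ε, (K (w + s) - K w)
        = (∫ a in (w - ε)..(w + ε), K a) - 2*ε*K w := by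
      rw [intervalIntegral.integral_sub hKw intervalIntegrable_const, h1,
        intervalIntegral.integral_const]
      simp only [smul_eq_mul]
      ring_nf
    have h3 : ∫ s, (K (w + s) - K w) ∂μs = ∫ s in (-ε)..ε, (K (w + s) - K w) :=
      (intervalIntegral.integral_of_le (by linarith)).symm
    rw [h3, h2]
    unfold gg
    rw [hεdef]
    field_simp
  have hsqrt : ∀ x : ℝ, 0 ≤ x → (x ^ (1/2:ℝ))^2 = x := by
    intro x hx
    rw [← Real.rpow_natCast (x ^ (1/2:ℝ)) 2, ← Real.rpow_mul hx]
    norm_num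
  -- pointwise Cauchy-Schwarz
  have hCS : ∀ w : ℝ, (gg K φ w - K w)^2 ≤ (φ/2) * ∫ s, (K (w + s) - K w)^2 ∂μs := by
    intro w
    set p : ℝ → ℝ := fun s => K (w + s) - K w with hpdef
    have hpmem : MemLp p 2 μs := by
      have h1 : MemLp (fun s => K (w + s)) 2 (volume : Measure ℝ) :=
        hK2.comp_measurePreserving (measurePreserving_add_left volume w)
      exact (h1.restrict _).sub (memLp_const _)
    have hone : MemLp (fun _ : ℝ => (1:ℝ)) 2 μs := memLp_const _
    have hpq : Real.HolderConjugate 2 2 := Real.HolderConjugate.two_two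
    have hCS2 := integral_mul_norm_le_Lp_mul_Lq (μ := μs) hpq
      (by simpa using hpmem) (by simpa using hone)
    have hnorm1 : ∀ s : ℝ, ‖p s‖ * ‖(1:ℝ)‖ = ‖p s‖ := by
      intro s; rw [norm_one, mul_one]
    have hnorm2 : ∀ s : ℝ, ‖p s‖ ^ (2:ℝ) = p s ^ 2 := by
      intro s
      rw [show (2:ℝ) = ((2:ℕ):ℝ) by norm_num, Real.rpow_natCast, Real.norm_eq_abs, sq_abs]
    have hnorm3 : ‖(1:ℝ)‖ ^ (2:ℝ) = (1:ℝ) := by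
      rw [norm_one, Real.one_rpow]
    simp only [hnorm1, hnorm2, hnorm3] at hCS2
    have hB : ∫ (_ : ℝ), (1:ℝ) ∂μs = 2*ε := by
      rw [MeasureTheory.integral_const, measureReal_def, hμsuniv, smul_eq_mul, mul_one,
        ENNReal.toReal_ofReal (by positivity)]
    rw [hB] at hCS2
    set A := ∫ s, p s ^ 2 ∂μs with hAdef
    have hA0 : 0 ≤ A := integral_nonneg fun s => sq_nonneg _
    have habs : |∫ s, p s ∂μs| ≤ A ^ (1/2:ℝ) * (2*ε) ^ (1/2:ℝ) := by
      refine le_trans ?_ hCS2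
      exact norm_integral_le_integral_norm p
    have hsq2 : (∫ s, p s ∂μs)^2 ≤ A * (2*ε) := by
      calc (∫ s, p s ∂μs)^2 = |∫ s, p s ∂μs|^2 := (sq_abs _).symm
        _ ≤ (A ^ (1/2:ℝ) * (2*ε) ^ (1/2:ℝ))^2 := by
            rw [sq, sq]; exact mul_self_le_mul_self (abs_nonneg _) habs
        _ = A * (2*ε) := by
            rw [mul_pow, hsqrt A hA0, hsqrt (2*ε) (by positivity)]
    calc (gg K φ w - K w)^2 = (φ/2)^2 * (∫ s, p s ∂μs)^2 := by
          rw [hrep w, mul_pow]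
      _ ≤ (φ/2)^2 * (A * (2*ε)) := by
          exact mul_le_mul_of_nonneg_left hsq2 (sq_nonneg _)
      _ = (φ/2) * A := by
          rw [hεdef]; field_simp
  -- Fubini
  have hK2int : Integrable (fun x => K x ^ 2) volume := hK2.integrable_sq
  have hP : Integrable (fun q : ℝ × ℝ => (K (q.1 + q.2) - K q.1)^2) (volume.prod μs) := by
    have hmeas : AEStronglyMeasurable (fun q : ℝ × ℝ => (K (q.1 + q.2) - K q.1)^2)
        (volume.prod μs) :=
      (((hKm.measurable.comp (measurable_fst.add measurable_snd)).sub
        (hKm.measurable.comp measurable_fst)).pow_const 2).aestronglyMeasurable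
    have hAint : Integrable (fun q : ℝ × ℝ => (K (q.1 + q.2))^2) (volume.prod μs) := by
      have hm : Measurable fun q : ℝ × ℝ => K (q.1 + q.2) ^ 2 :=
        (hKm.measurable.comp (measurable_fst.add measurable_snd)).pow_const 2
      refine (integrable_prod_iff' hm.aestronglyMeasurable).mpr ⟨?_, ?_⟩
      · refine Eventually.of_forall fun s => ?_
        exact hK2int.comp_add_right s
      · refine (integrable_const (∫ w, ‖K w ^2‖)).congr
          (Eventually.of_forall fun s => ?_)
        exact (integral_add_right_eq_self (fun w => ‖K w ^ 2‖) s).symm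
    have hBint : Integrable (fun q : ℝ × ℝ => (K q.1)^2) (volume.prod μs) := by
      have hm : Measurable fun q : ℝ × ℝ => K q.1 ^ 2 :=
        (hKm.measurable.comp measurable_fst).pow_const 2
      refine (integrable_prod_iff hm.aestronglyMeasurable).mpr ⟨?_, ?_⟩
      · exact Eventually.of_forall fun w =>
          (integrable_const (K w ^ 2) : Integrable (fun _ : ℝ => K w ^ 2) μs)
      · refine ((hK2int.norm).smul ((μs univ).toReal)).congr
          (Eventually.of_forall fun w => ?_)
        exact (MeasureTheory.integral_const _).symm
    refine Integrable.mono' ((hAint.const_mul 2).add (hBint.const_mul 2)) hmeas ?_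
    refine Eventually.of_forall fun q => ?_
    rw [Real.norm_eq_abs, abs_of_nonneg (sq_nonneg _)]
    simp only [Pi.add_apply]
    nlinarith [sq_nonneg (K (q.1 + q.2) + K q.1), sq_nonneg (K (q.1 + q.2) - K q.1)]
  calc ∫ w, (gg K φ w - K w)^2
      ≤ ∫ w, (φ/2) * ∫ s, (K (w + s) - K w)^2 ∂μs := by
        refine integral_mono_of_nonneg (Eventually.of_forall fun w => sq_nonneg _)
          ((hP.integral_prod_left).const_mul _) (Eventually.of_forall hCS)
    _ = (φ/2) * ∫ s, (∫ w, (K (w + s) - K w)^2) ∂μs := by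
        rw [MeasureTheory.integral_const_mul]
        congr 1
        exact integral_integral_swap hP
    _ ≤ (φ/2) * (η * (2*ε)) := by
        refine mul_le_mul_of_nonneg_left ?_ (by positivity)
        have hDint : Integrable (fun s => ∫ w, (K (w + s) - K w)^2) μs :=
          hP.swap.integral_prod_left
        calc ∫ s, (∫ w, (K (w + s) - K w)^2) ∂μs ≤ ∫ _, η ∂μs := by
              refine integral_mono_ae hDint (integrable_const _) ?_
              rw [hμs]
              rw [EventuallyLE, ae_restrict_iff' measurableSet_Ioc]
              refine Eventually.of_forall fun s hs => ?_
              exact hD s (abs_le.mpr ⟨by linarith [hs.1, hεδ], le_trans hs.2 hεδ⟩)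
          _ = η * (2*ε) := by
              rw [MeasureTheory.integral_const, measureReal_def, hμsuniv, smul_eq_mul,
                ENNReal.toReal_ofReal (by positivity)]
              ring
    _ = η := by
        rw [hεdef]; field_simp

lemma keylim (K : ℝ → ℝ) (hKm : StronglyMeasurable K) (hKint : Integrable K)
    (hK2 : MemLp K 2 (volume : Measure ℝ)) :
    Tendsto (fun φ : ℝ => ∫ w, (gg K φ w - K w)^2) atTop (nhds 0) := by
  obtain ⟨D, hDc, hD0, hDeq⟩ := contD K hK2
  rw [Metric.tendsto_atTop]
  intro η hη
  have hmem : D ⁻¹' Iio (η/2) ∈ nhds (0:ℝ) := by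
    refine hDc (Iio_mem_nhds ?_)
    rw [hD0]; linarith
  obtain ⟨δ, hδ0, hδ⟩ := Metric.mem_nhds_iff.mp hmem
  set δ' := δ/2 with hδ'def
  have hδ'0 : 0 < δ' := by positivity
  refine ⟨max 1 δ'⁻¹, fun φ hφ => ?_⟩
  have hφ1 : 1 ≤ φ := le_trans (le_max_left _ _) hφ
  have hφδ : δ'⁻¹ ≤ φ := le_trans (le_max_right _ _) hφ
  have hb : ∫ w, (gg K φ w - K w)^2 ≤ η/2 := by
    refine bound K hKm hK2 hφ1 hδ'0 hφδ (by linarith) hKint fun s hs => ?_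
    rw [← hDeq s]
    have : s ∈ D ⁻¹' Iio (η/2) := hδ (by
      simp only [Metric.mem_ball, Real.dist_eq, sub_zero]
      calc |s| ≤ δ' := hs
        _ < δ := by rw [hδ'def]; linarith)
    exact le_of_lt this
  have h0 : 0 ≤ ∫ w, (gg K φ w - K w)^2 := integral_nonneg fun w => sq_nonneg _
  rw [Real.dist_eq, sub_zero, abs_of_nonneg h0]
  linarith

lemma rpow_norm_sq (x : ℝ) : ‖x‖ ^ (2:ℝ) = x^2 := by
  rw [show (2:ℝ) = ((2:ℕ):ℝ) by norm_num, Real.rpow_natCast, Real.norm_eq_abs, sq_abs]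

lemma l2_mul_integrable {f g : ℝ → ℝ} (hf : MemLp f 2 (volume : Measure ℝ))
    (hg : MemLp g 2 (volume : Measure ℝ)) :
    Integrable (fun x => f x * g x) (volume : Measure ℝ) := by
  refine Integrable.mono' (((hf.integrable_sq.add hg.integrable_sq).const_mul (1/2)))
    (hf.aestronglyMeasurable.mul hg.aestronglyMeasurable)
    (Eventually.of_forall fun x => ?_)
  rw [Real.norm_eq_abs, abs_mul]
  simp only [Pi.add_apply]
  nlinarith [sq_nonneg (|f x| - |g x|), sq_abs (f x), sq_abs (g x), abs_nonneg (f x),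
    abs_nonneg (g x)]

lemma main (K : ℝ → ℝ) (hKm : StronglyMeasurable K) (hKint : Integrable K)
    (hK2 : MemLp K 2 (volume : Measure ℝ)) (hKsupp : HasCompactSupport K) :
    Tendsto (fun φ : ℝ =>
        φ * ((1/2) * ∫ z, (∫ a in ((z - 1)/φ)..((z + 1)/φ), K a) ^ 2))
      atTop (nhds (2 * ∫ u, K u ^ 2)) := by
  have hE := keylim K hKm hKint hK2
  set E := fun φ : ℝ => ∫ w, (gg K φ w - K w)^2 with hEdef
  set C := fun φ : ℝ => ∫ w, (gg K φ w - K w) * K w with hCdef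
  have hK2int := hK2.integrable_sq
  set M := (∫ w, K w ^2) ^ (1/2:ℝ) with hMdef
  have hpq : Real.HolderConjugate 2 2 := Real.HolderConjugate.two_two
  have hCbound : ∀ᶠ φ in atTop, ‖C φ‖ ≤ (E φ) ^ (1/2:ℝ) * M := by
    filter_upwards [eventually_ge_atTop (1:ℝ)] with φ hφ
    have hgmem := gg_memℒp K hKint hKsupp hφ
    have hdiff : MemLp (fun w => gg K φ w - K w) 2 (volume : Measure ℝ) := hgmem.sub hK2
    have h := integral_mul_norm_le_Lp_mul_Lq (μ := (volume : Measure ℝ)) hpq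
      (by simpa using hdiff) (by simpa using hK2)
    simp only [rpow_norm_sq] at h
    calc ‖C φ‖ ≤ ∫ w, ‖(gg K φ w - K w) * K w‖ := norm_integral_le_integral_norm _
      _ = ∫ w, ‖gg K φ w - K w‖ * ‖K w‖ := by
          refine integral_congr_ae (Eventually.of_forall fun w => ?_)
          simp [norm_mul]
      _ ≤ (E φ) ^ (1/2:ℝ) * M := h
  have hEhalf : Tendsto (fun φ => (E φ) ^ (1/2:ℝ) * M) atTop (nhds 0) := by
    have hc : ContinuousAt (fun x : ℝ => x ^ (1/2:ℝ) * M) 0 := by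
      refine ContinuousAt.mul ?_ continuousAt_const
      exact Real.continuousAt_rpow_const 0 (1/2) (Or.inr (by norm_num))
    have := hc.tendsto.comp hE
    simpa [Function.comp_def, Real.zero_rpow (by norm_num : (1/2:ℝ) ≠ 0)] using this
  have hCtend : Tendsto C atTop (nhds 0) := squeeze_zero_norm' hCbound hEhalf
  have hsum : Tendsto (fun φ => 2 * (E φ + 2 * C φ + ∫ w, K w ^2)) atTop
      (nhds (2 * (0 + 2 * 0 + ∫ w, K w ^2))) := by
    exact (((hE.add (hCtend.const_mul 2)).add_const _).const_mul 2)
  have hval : (2 : ℝ) * (0 + 2 * 0 + ∫ w, K w ^2) = 2 * ∫ u, K u ^2 := by ring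
  rw [hval] at hsum
  refine hsum.congr' ?_
  filter_upwards [eventually_ge_atTop (1:ℝ)] with φ hφ
  have hgmem := gg_memℒp K hKint hKsupp hφ
  have hdiff : MemLp (fun w => gg K φ w - K w) 2 (volume : Measure ℝ) := hgmem.sub hK2
  have hmul : Integrable (fun w => (gg K φ w - K w) * K w) (volume : Measure ℝ) :=
    l2_mul_integrable hdiff hK2
  have hexp : ∫ w, (gg K φ w)^2
      = E φ + 2 * C φ + ∫ w, K w ^2 := by
    have hpt : ∀ w, (gg K φ w)^2
        = (gg K φ w - K w)^2 + (2*((gg K φ w - K w) * K w) + K w^2) := fun w => by ring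
    rw [hEdef, hCdef]
    calc ∫ w, (gg K φ w)^2
        = ∫ w, ((gg K φ w - K w)^2 + (2*((gg K φ w - K w) * K w) + K w^2)) := by
          exact integral_congr_ae (Eventually.of_forall hpt)
      _ = (∫ w, (gg K φ w - K w)^2)
          + ∫ w, (2*((gg K φ w - K w) * K w) + K w^2) := by
          exact integral_add hdiff.integrable_sq ((hmul.const_mul 2).add hK2int)
      _ = (∫ w, (gg K φ w - K w)^2)
          + (2 * (∫ w, (gg K φ w - K w) * K w) + ∫ w, K w ^2) := by
          rw [integral_add (hmul.const_mul 2) hK2int, MeasureTheory.integral_const_mul]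
      _ = (fun φ : ℝ => ∫ w, (gg K φ w - K w)^2) φ
          + 2 * (fun φ : ℝ => ∫ w, (gg K φ w - K w) * K w) φ + ∫ w, K w ^2 := by
          beta_reduce
          ring
  rw [alg K hφ, hexp]

theorem stmt_17 (K : ℝ → ℝ) (hK0 : ∀ u, 0 ≤ K u) (hKint : Integrable K)
    (hK1 : ∫ u, K u = 1) (hK2 : Integrable (fun u => K u ^ 2))
    (hKsupp : HasCompactSupport K) :
    Tendsto (fun φ : ℝ =>
        φ * ((1/2) * ∫ z, (∫ a in ((z - 1)/φ)..((z + 1)/φ), K a) ^ 2))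
      atTop (nhds (2 * ∫ u, K u ^ 2)) := by
  classical
  set K' : ℝ → ℝ := (tsupport K).indicator (hKint.1.mk K) with hK'def
  have hae : K =ᵐ[volume] K' := by
    filter_upwards [hKint.1.ae_eq_mk] with x hx
    rw [hK'def]
    by_cases hxs : x ∈ tsupport K
    · rw [Set.indicator_of_mem hxs]; exact hx
    · rw [Set.indicator_of_notMem hxs]
      have hx0 : x ∉ Function.support K := fun h => hxs (subset_tsupport K h)
      simpa using hx0
  have hK'm : StronglyMeasurable K' :=
    hKint.1.stronglyMeasurable_mk.indicator (isClosed_tsupport K).measurableSet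
  have hK'int : Integrable K' := hKint.congr hae
  have hK'2 : MemLp K' 2 (volume : Measure ℝ) :=
    ((memLp_two_iff_integrable_sq hKint.1).mpr hK2).ae_eq hae
  have hK'supp : HasCompactSupport K' := by
    refine IsCompact.of_isClosed_subset hKsupp (isClosed_tsupport K') ?_
    exact closure_minimal (Set.support_indicator_subset.trans subset_rfl)
      (isClosed_tsupport K)
  have hinteq : ∀ u v : ℝ, (∫ a in u..v, K' a) = ∫ a in u..v, K a := fun u v =>
    intervalIntegral.integral_congr_ae (hae.mono fun x hx _ => hx.symm)
  have hsq : (∫ u, K u ^2) = ∫ u, K' u ^2 :=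
    integral_congr_ae (hae.mono fun x hx => by simp only [hx])
  have hmain := main K' hK'm hK'int hK'2 hK'supp
  rw [hsq]
  refine hmain.congr fun φ => ?_
  simp only [hinteq]
end
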